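/- arXiv:2305.09974 — 2 statements merged into one kernel-verified Lean document; each statement's English description precedes it below -/
import Mathlib

section
/- Let m ≥ 1, ℓ ≥ 1, α > 0, σ̂² > 0, and let C_m be a real number with C_m ≤ m(m−1)ℓσ̂². Define V_old = (ℓ/m)σ̂² + C_m/m² and V_new = ((mℓ + 3ℓ + α)/(m+1)²)σ̂² + ((m+2)/(m(m+1)²))·C_m. Then V_new − V_old = [(m(m−1)ℓ + m²α)σ̂² − C_m] / (m²(m+1)²) ≥ ασ̂²/(m+1)² > 0. -/
/-- Entropy/variance increase from aggregating a redundant path.  Let `m ≥ 1`, `ℓ ≥ 1`,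
`α > 0`, `σ̂² > 0` and let `C_m ≤ m(m−1)ℓσ̂²`.  With
`V_old = (ℓ/m)σ̂² + C_m/m²` and
`V_new = ((mℓ + 3ℓ + α)/(m+1)²)σ̂² + ((m+2)/(m(m+1)²))·C_m`, we have
`V_new − V_old = [(m(m−1)ℓ + m²α)σ̂² − C_m]/(m²(m+1)²) ≥ ασ̂²/(m+1)² > 0`. -/
theorem redundant_path_variance_increase
    (m ℓ α σ2 Cm : ℝ)
    (hm : 1 ≤ m) (hℓ : 1 ≤ ℓ) (hα : 0 < α) (hσ : 0 < σ2)
    (hC : Cm ≤ m * (m - 1) * ℓ * σ2) :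
    ((m * ℓ + 3 * ℓ + α) / (m + 1) ^ 2 * σ2 + (m + 2) / (m * (m + 1) ^ 2) * Cm) -
        ((ℓ / m) * σ2 + Cm / m ^ 2) =
      ((m * (m - 1) * ℓ + m ^ 2 * α) * σ2 - Cm) / (m ^ 2 * (m + 1) ^ 2) ∧
    α * σ2 / (m + 1) ^ 2 ≤
      ((m * (m - 1) * ℓ + m ^ 2 * α) * σ2 - Cm) / (m ^ 2 * (m + 1) ^ 2) ∧
    0 < α * σ2 / (m + 1) ^ 2 := by
  have hm0 : (0:ℝ) < m := lt_of_lt_of_le one_pos hm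
  have hm1 : (0:ℝ) < (m + 1) ^ 2 := by positivity
  have hne : m ≠ 0 := ne_of_gt hm0
  refine ⟨by field_simp; ring, ?_, by positivity⟩
  rw [div_le_div_iff₀ hm1 (by positivity)]
  nlinarith [mul_pos (mul_pos hα hσ) hm1, sq_nonneg m]
end

section
/- Every percolation path from q to a vertex t has length either γ(t) or γ(t)+1. Conversely, every shortest path from q to t is a percolation path. -/
/-- `vs` is the list of successive vertices (after `q`) of a walk in the directed graph
with edge relation `E`, starting at `q` and ending at `t`.  Its length is `vs.length`. -/
def IsWalkFrom (E : V → V → Prop) (q : V) (vs : List V) (t : V) : Prop :=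
  List.Chain E q vs ∧ (q :: vs).getLast (List.cons_ne_nil q vs) = t

/-- The list of directed edges traversed by the walk `q :: vs`. -/
def edgesOf (q : V) (vs : List V) : List (V × V) :=
  (q :: vs).zip vs

/-- A shortest path from `q` to `t`: a walk whose length equals the distance `γ t`. -/
def IsShortestWalk (E : V → V → Prop) (q : V) (γ : V → ℕ) (vs : List V) (t : V) : Prop :=
  IsWalkFrom E q vs t ∧ vs.length = γ t

/-- The edge `e` lies on some shortest path from `q` to `v`. -/
def OnShortestPath (E : V → V → Prop) (q : V) (γ : V → ℕ) (e : V × V) (v : V) : Prop :=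
  ∃ vs, IsShortestWalk E q γ vs v ∧ e ∈ edgesOf q vs

/-- A redundant path from `q` to `v`: a walk of length strictly greater than `γ v`, at
least `γ v` of whose (distinct) edges also occur in shortest paths from `q` to `v`. -/
def IsRedundantWalk (E : V → V → Prop) (q : V) (γ : V → ℕ) (vs : List V) (v : V) : Prop :=
  IsWalkFrom E q vs v ∧ γ v < vs.length ∧
    ∃ es : List (V × V), es.Nodup ∧ (∀ e ∈ es, e ∈ edgesOf q vs) ∧ γ v ≤ es.length ∧
      ∀ e ∈ es, OnShortestPath E q γ e v

/-- `γ` is the shortest-path distance from `q` in the (connected) graph `E`: every vertex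
is reachable by a walk of length `γ v`, and no walk to `v` is shorter than `γ v`. -/
def IsDistance (E : V → V → Prop) (q : V) (γ : V → ℕ) : Prop :=
  (∀ v (vs : List V), IsWalkFrom E q vs v → γ v ≤ vs.length) ∧
  (∀ v, ∃ vs, IsWalkFrom E q vs v ∧ vs.length = γ v)

/-- A percolation path from `q` to `t`: a walk all of whose edges before the last are
strictly downhill (`γ` increases by exactly 1) and whose last edge `(u, v)` satisfies
`γ u ≤ γ v` (downhill or level). -/
def IsPercolationWalk (E : V → V → Prop) (q : V) (γ : V → ℕ) (vs : List V) (t : V) :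
    Prop :=
  IsWalkFrom E q vs t ∧
  (∀ e ∈ (edgesOf q vs).dropLast, γ e.2 = γ e.1 + 1) ∧
  (vs ≠ [] →
    γ ((edgesOf q vs).getLastD (q, q)).1 ≤ γ ((edgesOf q vs).getLastD (q, q)).2)

/-! A walk along which `γ` rises by at most one per edge ends at height at most `γ q + length`,
with equality only if every edge rises by exactly one. Since `γ q = 0`, a shortest walk, ending
at height equal to its length, therefore climbs strictly at every step, so it is a percolation
walk. Conversely, a percolation walk of length `n + 1` reaches height `n` after its strictly
climbing first `n` edges; its last edge does not descend, so `n ≤ γ t ≤ n + 1`. -/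

lemma edgesOf_cons (u v : V) (vs : List V) :
    edgesOf u (v :: vs) = (u, v) :: edgesOf v vs := by
  simp [edgesOf]

lemma edgesOf_concat (u : V) (vs : List V) (t : V) :
    edgesOf u (vs ++ [t]) =
      edgesOf u vs ++ [((u :: vs).getLast (List.cons_ne_nil u vs), t)] := by
  induction vs generalizing u with
  | nil => simp [edgesOf]
  | cons v vs ih => simp [edgesOf_cons, ih]

section Heights

variable (γ : V → ℕ)

lemma getLast_eq_add_length_of_forall_edgesOf {u : V} {vs : List V}
    (hstep : ∀ e ∈ edgesOf u vs, γ e.2 = γ e.1 + 1) :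
    γ ((u :: vs).getLast (List.cons_ne_nil u vs)) = γ u + vs.length := by
  induction vs generalizing u with
  | nil => simp
  | cons v vs ih =>
    simp only [edgesOf_cons, List.forall_mem_cons] at hstep
    rw [List.getLast_cons (List.cons_ne_nil v vs), ih hstep.2, hstep.1, List.length_cons]
    ring

variable {E : V → V → Prop} (hadj : ∀ u v, E u v → γ v ≤ γ u + 1)
include hadj

lemma getLast_le_add_length {u : V} {vs : List V} (hwalk : List.IsChain E (u :: vs)) :
    γ ((u :: vs).getLast (List.cons_ne_nil u vs)) ≤ γ u + vs.length := by
  induction vs generalizing u with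
  | nil => simp
  | cons v vs ih =>
    obtain ⟨huv, hrest⟩ := List.isChain_cons_cons.1 hwalk
    rw [List.getLast_cons (List.cons_ne_nil v vs), List.length_cons]
    linarith [ih hrest, hadj u v huv]

lemma forall_edgesOf_of_add_length_le_getLast {u : V} {vs : List V}
    (hwalk : List.IsChain E (u :: vs))
    (hhigh : γ u + vs.length ≤ γ ((u :: vs).getLast (List.cons_ne_nil u vs))) :
    ∀ e ∈ edgesOf u vs, γ e.2 = γ e.1 + 1 := by
  induction vs generalizing u with
  | nil => simp [edgesOf]
  | cons v vs ih =>
    obtain ⟨huv, hrest⟩ := List.isChain_cons_cons.1 hwalk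
    rw [List.getLast_cons (List.cons_ne_nil v vs), List.length_cons] at hhigh
    have hv : γ v = γ u + 1 := by
      linarith [getLast_le_add_length γ hadj hrest, hadj u v huv]
    rw [edgesOf_cons, List.forall_mem_cons]
    exact ⟨hv, ih hrest (by omega)⟩

end Heights

lemma IsDistance.apply_self {E : V → V → Prop} {q : V} {γ : V → ℕ}
    (hγ : IsDistance E q γ) : γ q = 0 :=
  Nat.le_zero.1 (hγ.1 q [] ⟨List.IsChain.singleton q, rfl⟩)

lemma IsPercolationWalk.length_eq_or_eq_succ {E : V → V → Prop} {q : V} {γ : V → ℕ}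
    (hγ : IsDistance E q γ) {vs : List V} {t : V} (hperc : IsPercolationWalk E q γ vs t) :
    vs.length = γ t ∨ vs.length = γ t + 1 := by
  obtain ⟨hwalk, hclimb, hlast⟩ := hperc
  have hmin := hγ.1 t vs hwalk
  rcases vs.eq_nil_or_concat' with rfl | ⟨init, s, rfl⟩
  · exact Or.inl (by simpa using (Nat.le_zero.1 hmin).symm)
  obtain rfl : t = s := by simpa using hwalk.2.symm
  rw [edgesOf_concat, List.dropLast_concat] at hclimb
  have hlast := hlast (List.concat_ne_nil t init)
  rw [edgesOf_concat, List.getLastD_concat, getLast_eq_add_length_of_forall_edgesOf γ hclimb,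
    hγ.apply_self] at hlast
  simp only [List.length_append, List.length_singleton] at hlast hmin ⊢
  omega

lemma IsShortestWalk.isPercolationWalk {E : V → V → Prop} {q : V} {γ : V → ℕ}
    (hq : γ q = 0) (hadj : ∀ u v, E u v → γ v ≤ γ u + 1) {vs : List V} {t : V}
    (hshort : IsShortestWalk E q γ vs t) : IsPercolationWalk E q γ vs t := by
  obtain ⟨hwalk, hlen⟩ := hshort
  have hclimb := forall_edgesOf_of_add_length_le_getLast γ hadj hwalk.1
    (by rw [hwalk.2, hq, hlen, zero_add])
  refine ⟨hwalk, fun e he ↦ hclimb e (List.dropLast_subset _ he), fun _ ↦ ?_⟩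
  rcases List.mem_cons.1 (List.getLastD_mem_cons (l := edgesOf q vs) (a := (q, q))) with h | h
  · rw [h]
  · rw [hclimb _ h]
    exact Nat.le_succ _

/-- Every percolation path from `q` to `t` has length `γ t` or `γ t + 1`, and conversely
every shortest path from `q` to `t` is a percolation path.  (`γ` is the shortest-path
distance from `q`, and edges change `γ` by at most 1.) -/
theorem percolation_walk_length_and_shortest_is_percolation
    (E : V → V → Prop) (q : V) (γ : V → ℕ) (hγ : IsDistance E q γ)
    (hadj : ∀ u v, E u v → γ v ≤ γ u + 1) :
    (∀ (vs : List V) (t : V), IsPercolationWalk E q γ vs t →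
        vs.length = γ t ∨ vs.length = γ t + 1) ∧
      (∀ (vs : List V) (t : V), IsShortestWalk E q γ vs t →
        IsPercolationWalk E q γ vs t) :=
  ⟨fun _ _ hperc ↦ hperc.length_eq_or_eq_succ hγ,
    fun _ _ hshort ↦ hshort.isPercolationWalk hγ.apply_self hadj⟩
end
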